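/- Let R be a commutative ring and t' = [[a,b],[c,d]] ∈ SL₂(R) such that d_n·t'·d_n⁻¹ = t'ⁿ for all integers n ≥ 1, where d_n = [[n,0],[0,1]] (assuming n is invertible in R where needed). Then t' is upper unitriangular: t' = [[1,b],[0,1]] for some b ∈ R. -/

import Mathlib

/-!
Write `τ = a + d` for the trace of `t'`. Since `det t' = 1`, Cayley–Hamilton gives `t'² = τ t' - 1`
and `t'³ = (τ² - 1) t' - τ`. Conjugation by `d_n` fixes the `(1,1)` entry and divides the `(1,0)`
entry by `n`, so the cases `n = 2, 3` give `d = τ d - 1 = (τ² - 1) d - τ`, whence `d = 1` and `τ = 2`,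
and `c = 2 τ c = 3 (τ² - 1) c`, i.e. `3 c = 0 = 8 c`, whence `c = 0`.
-/

open Matrix

namespace Matrix

variable {R : Type*} [CommRing R]

theorem row_one_of_diag_mul_eq_mul_diag (x : R) {A B : Matrix (Fin 2) (Fin 2) R}
    (h : !![x, 0; 0, 1] * A = B * !![x, 0; 0, 1]) : A 1 0 = x * B 1 0 ∧ A 1 1 = B 1 1 := by
  have h10 := congrFun (congrFun h 1) 0
  have h11 := congrFun (congrFun h 1) 1
  simp only [mul_apply, Fin.sum_univ_two, of_apply, cons_val', cons_val_zero, cons_val_one,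
    empty_val', cons_val_fin_one, zero_mul, one_mul, zero_add, mul_zero, mul_one,
    add_zero] at h10 h11
  exact ⟨h10.trans (mul_comm _ _), h11⟩

theorem sq_eq_trace_smul_sub_one_of_det_eq_one {t : Matrix (Fin 2) (Fin 2) R} (hdet : t.det = 1) :
    t ^ 2 = t.trace • t - 1 := by
  rw [det_fin_two] at hdet
  ext i j
  fin_cases i <;> fin_cases j <;>
    simp only [Fin.zero_eta, Fin.mk_one, Fin.isValue, sq, mul_apply, Fin.sum_univ_two,
      trace_fin_two, Matrix.sub_apply, Matrix.smul_apply, smul_eq_mul, one_apply_eq, ne_eq,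
      zero_ne_one, one_ne_zero, not_false_eq_true, one_apply_ne, sub_zero]
  · linear_combination -hdet
  · ring
  · ring
  · linear_combination -hdet

theorem pow_three_eq_of_det_eq_one {t : Matrix (Fin 2) (Fin 2) R} (hdet : t.det = 1) :
    t ^ 3 = (t.trace ^ 2 - 1) • t - t.trace • 1 := by
  have hsq := sq_eq_trace_smul_sub_one_of_det_eq_one hdet
  rw [pow_succ, hsq, sub_mul, smul_mul_assoc, ← sq, hsq, one_mul]
  module

end Matrix

theorem eq_one_and_eq_two_of_eq_mul_sub_one_of_eq_sq_sub_one_mul_sub {R : Type*} [CommRing R]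
    {τ d : R}
    (h2 : d = τ * d - 1) (h3 : d = (τ ^ 2 - 1) * d - τ) : d = 1 ∧ τ = 2 := by
  have hd : d = 1 := by linear_combination h3 - (τ + 1) * h2
  exact ⟨hd, by linear_combination -h2 + (1 - τ) * hd⟩

theorem stmt_16 (R : Type*) [CommRing R] (t' : Matrix (Fin 2) (Fin 2) R)
    (hdet : t'.det = 1)
    (hconj : ∀ n : ℕ, 1 ≤ n →
      !![(n : R), 0; 0, 1] * t' = t' ^ n * !![(n : R), 0; 0, 1]) :
    ∃ b : R, t' = !![1, b; 0, 1] := by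
  obtain ⟨hc2, hd2⟩ := row_one_of_diag_mul_eq_mul_diag _ (hconj 2 (by norm_num))
  obtain ⟨hc3, hd3⟩ := row_one_of_diag_mul_eq_mul_diag _ (hconj 3 (by norm_num))
  rw [sq_eq_trace_smul_sub_one_of_det_eq_one hdet] at hc2 hd2
  rw [pow_three_eq_of_det_eq_one hdet] at hc3 hd3
  simp only [Matrix.sub_apply, Matrix.smul_apply, smul_eq_mul, one_apply_eq,
    one_apply_ne one_ne_zero, mul_one, mul_zero, sub_zero, Nat.cast_ofNat] at hc2 hd2 hc3 hd3
  obtain ⟨hd, hτ⟩ := eq_one_and_eq_two_of_eq_mul_sub_one_of_eq_sq_sub_one_mul_sub hd2 hd3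
  have hc : t' 1 0 = 0 := by
    rw [hτ] at hc2 hc3
    linear_combination hc3 - 3 * hc2
  have ha : t' 0 0 = 1 := by
    rw [trace_fin_two] at hτ
    linear_combination hτ - hd
  refine ⟨t' 0 1, ?_⟩
  ext i j
  fin_cases i <;> fin_cases j <;> simp [ha, hc, hd]
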